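/- arXiv:1703.04119 — 6 statements merged into one kernel-verified Lean document; each statement's English description precedes it below -/
import Mathlib

section
/- Let 3 ≤ a ≤ b ≤ c be integers. Then 1/a + 1/b + 1/c − 1/2 > 0 if and only if (a, b, c) is one of the following: (3,3,c) with c ≥ 3; (3,4,c) with c ≥ 4; (3,5,c) with c ≥ 5; (3,6,c) with c ≥ 6; (3,7,c) with 7 ≤ c ≤ 41; (3,8,c) with 8 ≤ c ≤ 23; (3,9,c) with 9 ≤ c ≤ 17; (3,10,c) with 10 ≤ c ≤ 14; (3,11,c) with 11 ≤ c ≤ 13; (4,4,c) with c ≥ 4; (4,5,c) with 5 ≤ c ≤ 19; (4,6,c) with 6 ≤ c ≤ 11; (4,7,c) with 7 ≤ c ≤ 9; (5,5,c) with 5 ≤ c ≤ 9; (5,6,c) with 6 ≤ c ≤ 7. -/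
set_option maxHeartbeats 1000000

/-- Reduction of positive curvature to a natural-number inequality. -/
lemma curv_pos_iff_nat (a b c : ℕ) (ha : 0 < a) (hb : 0 < b) (hc : 0 < c) :
    0 < 1 / (a : ℚ) + 1 / (b : ℚ) + 1 / (c : ℚ) - 1 / 2 ↔
      a * b * c < 2 * (b * c + a * c + a * b) := by
  have ha' : (0:ℚ) < a := by exact_mod_cast ha
  have hb' : (0:ℚ) < b := by exact_mod_cast hb
  have hc' : (0:ℚ) < c := by exact_mod_cast hc
  have key : 1 / (a : ℚ) + 1 / (b : ℚ) + 1 / (c : ℚ) - 1 / 2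
      = ((2 * (b * c + a * c + a * b) : ℚ) - a * b * c) / (2 * a * b * c) := by
    field_simp
  rw [key, lt_div_iff₀ (by positivity), zero_mul, sub_pos]
  constructor
  · intro h
    exact_mod_cast h
  · intro h
    exact_mod_cast h

/-- Classification of the vertex patterns `(a, b, c)` with `3 ≤ a ≤ b ≤ c`
having positive combinatorial curvature `1/a + 1/b + 1/c - 1/2 > 0`
(the `n = 3` part of Table 1). -/
theorem triple_pos_curv_classification (a b c : ℕ)
    (ha : 3 ≤ a) (hab : a ≤ b) (hbc : b ≤ c) :
    0 < 1 / (a : ℚ) + 1 / (b : ℚ) + 1 / (c : ℚ) - 1 / 2 ↔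
      (a = 3 ∧ b = 3 ∧ 3 ≤ c) ∨
      (a = 3 ∧ b = 4 ∧ 4 ≤ c) ∨
      (a = 3 ∧ b = 5 ∧ 5 ≤ c) ∨
      (a = 3 ∧ b = 6 ∧ 6 ≤ c) ∨
      (a = 3 ∧ b = 7 ∧ 7 ≤ c ∧ c ≤ 41) ∨
      (a = 3 ∧ b = 8 ∧ 8 ≤ c ∧ c ≤ 23) ∨
      (a = 3 ∧ b = 9 ∧ 9 ≤ c ∧ c ≤ 17) ∨
      (a = 3 ∧ b = 10 ∧ 10 ≤ c ∧ c ≤ 14) ∨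
      (a = 3 ∧ b = 11 ∧ 11 ≤ c ∧ c ≤ 13) ∨
      (a = 4 ∧ b = 4 ∧ 4 ≤ c) ∨
      (a = 4 ∧ b = 5 ∧ 5 ≤ c ∧ c ≤ 19) ∨
      (a = 4 ∧ b = 6 ∧ 6 ≤ c ∧ c ≤ 11) ∨
      (a = 4 ∧ b = 7 ∧ 7 ≤ c ∧ c ≤ 9) ∨
      (a = 5 ∧ b = 5 ∧ 5 ≤ c ∧ c ≤ 9) ∨
      (a = 5 ∧ b = 6 ∧ 6 ≤ c ∧ c ≤ 7) := by
  rw [curv_pos_iff_nat a b c (by omega) (by omega) (by omega)]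
  constructor
  · intro h
    -- first bound a ≤ 5
    have ha5 : a ≤ 5 := by
      by_contra h6
      push_neg at h6
      have h1 : a * c ≤ b * c := Nat.mul_le_mul_right c hab
      have h2 : a * b ≤ b * c := by
        calc a * b ≤ c * b := Nat.mul_le_mul_right b (hab.trans hbc)
        _ = b * c := Nat.mul_comm c b
      have h3 : 6 * (b * c) ≤ a * b * c := by
        have := Nat.mul_le_mul_right (b * c) h6
        calc 6 * (b * c) ≤ a * (b * c) := Nat.mul_le_mul_right (b * c) h6
        _ = a * b * c := (Nat.mul_assoc a b c).symm
      linarith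
    interval_cases a
    · -- a = 3
      have hb11 : b ≤ 11 := by
        by_contra hb12
        push_neg at hb12
        have h6b : 6 * b ≤ 6 * c := Nat.mul_le_mul_left 6 hbc
        have hbc12 : b * c < 12 * c := by linarith
        have := Nat.lt_of_mul_lt_mul_right hbc12
        omega
      interval_cases b <;> norm_num <;> omega
    · -- a = 4
      have hb7 : b ≤ 7 := by
        by_contra hb8
        push_neg at hb8
        have h8b : 8 * b ≤ 8 * c := Nat.mul_le_mul_left 8 hbc
        have hbc8 : 2 * (b * c) < 16 * c := by linarith
        have h16 : 16 * c = 2 * (8 * c) := by ring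
        have : b * c < 8 * c := by omega
        have := Nat.lt_of_mul_lt_mul_right this
        omega
      interval_cases b <;> norm_num <;> omega
    · -- a = 5
      have hb6 : b ≤ 6 := by
        by_contra hb7
        push_neg at hb7
        have h10b : 10 * b ≤ 10 * c := Nat.mul_le_mul_left 10 hbc
        have h3bc : 3 * (b * c) < 20 * c := by linarith
        have h21 : 21 * c ≤ 3 * (b * c) := by
          calc 21 * c = 3 * (7 * c) := by ring
          _ ≤ 3 * (b * c) := by
            have : 7 * c ≤ b * c := Nat.mul_le_mul_right c hb7
            omega
        omega
      interval_cases b <;> norm_num <;> omega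
  · rintro (⟨rfl, rfl, h⟩ | ⟨rfl, rfl, h⟩ | ⟨rfl, rfl, h⟩ | ⟨rfl, rfl, h⟩ |
      ⟨rfl, rfl, h⟩ | ⟨rfl, rfl, h⟩ | ⟨rfl, rfl, h⟩ | ⟨rfl, rfl, h⟩ | ⟨rfl, rfl, h⟩ |
      ⟨rfl, rfl, h⟩ | ⟨rfl, rfl, h⟩ | ⟨rfl, rfl, h⟩ | ⟨rfl, rfl, h⟩ | ⟨rfl, rfl, h⟩ |
      ⟨rfl, rfl, h⟩) <;> omega
end

section
/- Let 3 ≤ a ≤ b ≤ c ≤ d be integers. Then 1/a + 1/b + 1/c + 1/d − 1 > 0 if and only if (a, b, c, d) is one of the following: (3,3,3,d) with d ≥ 3; (3,3,4,d) with 4 ≤ d ≤ 11; (3,3,5,d) with 5 ≤ d ≤ 7; (3,4,4,d) with 4 ≤ d ≤ 5. -/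
lemma inv_cast_anti (x y : ℕ) (hx : 0 < x) (hxy : x ≤ y) : (1:ℚ)/y ≤ 1/x := by
  apply one_div_le_one_div_of_le
  · exact_mod_cast hx
  · exact_mod_cast hxy

lemma inv_cast_le (x n : ℕ) (hn : 0 < n) (h : n ≤ x) : (1:ℚ)/x ≤ 1/n :=
  inv_cast_anti n x hn h

/-- Classification of the vertex patterns `(a, b, c, d)` with `3 ≤ a ≤ b ≤ c ≤ d`
having positive combinatorial curvature `1/a + 1/b + 1/c + 1/d - 1 > 0`
(the `n = 4` part of Table 1). -/
theorem quadruple_pos_curv_classification (a b c d : ℕ)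
    (ha : 3 ≤ a) (hab : a ≤ b) (hbc : b ≤ c) (hcd : c ≤ d) :
    0 < 1 / (a : ℚ) + 1 / (b : ℚ) + 1 / (c : ℚ) + 1 / (d : ℚ) - 1 ↔
      (a = 3 ∧ b = 3 ∧ c = 3 ∧ 3 ≤ d) ∨
      (a = 3 ∧ b = 3 ∧ c = 4 ∧ 4 ≤ d ∧ d ≤ 11) ∨
      (a = 3 ∧ b = 3 ∧ c = 5 ∧ 5 ≤ d ∧ d ≤ 7) ∨
      (a = 3 ∧ b = 4 ∧ c = 4 ∧ 4 ≤ d ∧ d ≤ 5) := by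
  have hb : 3 ≤ b := le_trans ha hab
  have hc : 3 ≤ c := le_trans hb hbc
  have hd : 3 ≤ d := le_trans hc hcd
  constructor
  · intro h
    have ha3 : a = 3 := by
      by_contra hne
      have h4 : 4 ≤ a := by omega
      have l1 : (1:ℚ)/a ≤ 1/4 := inv_cast_le a 4 (by norm_num) h4
      have l2 : (1:ℚ)/b ≤ 1/4 := inv_cast_le b 4 (by norm_num) (by omega)
      have l3 : (1:ℚ)/c ≤ 1/4 := inv_cast_le c 4 (by norm_num) (by omega)
      have l4 : (1:ℚ)/d ≤ 1/4 := inv_cast_le d 4 (by norm_num) (by omega)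
      linarith
    subst ha3
    have hb4 : b ≤ 4 := by
      by_contra hne
      have l2 : (1:ℚ)/b ≤ 1/5 := inv_cast_le b 5 (by norm_num) (by omega)
      have l3 : (1:ℚ)/c ≤ 1/5 := inv_cast_le c 5 (by norm_num) (by omega)
      have l4 : (1:ℚ)/d ≤ 1/5 := inv_cast_le d 5 (by norm_num) (by omega)
      linarith
    interval_cases b
    · -- b = 3
      have hc5 : c ≤ 5 := by
        by_contra hne
        have l3 : (1:ℚ)/c ≤ 1/6 := inv_cast_le c 6 (by norm_num) (by omega)
        have l4 : (1:ℚ)/d ≤ 1/6 := inv_cast_le d 6 (by norm_num) (by omega)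
        linarith
      interval_cases c
      · exact Or.inl ⟨rfl, rfl, rfl, hd⟩
      · refine Or.inr (Or.inl ⟨rfl, rfl, rfl, hcd, ?_⟩)
        by_contra hne
        have l4 : (1:ℚ)/d ≤ 1/12 := inv_cast_le d 12 (by norm_num) (by omega)
        linarith
      · refine Or.inr (Or.inr (Or.inl ⟨rfl, rfl, rfl, hcd, ?_⟩))
        by_contra hne
        have l4 : (1:ℚ)/d ≤ 1/8 := inv_cast_le d 8 (by norm_num) (by omega)
        linarith
    · -- b = 4
      have hc4 : c = 4 := by
        by_contra hne
        have l3 : (1:ℚ)/c ≤ 1/5 := inv_cast_le c 5 (by norm_num) (by omega)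
        have l4 : (1:ℚ)/d ≤ 1/5 := inv_cast_le d 5 (by norm_num) (by omega)
        linarith
      subst hc4
      refine Or.inr (Or.inr (Or.inr ⟨rfl, rfl, rfl, hcd, ?_⟩))
      by_contra hne
      have l4 : (1:ℚ)/d ≤ 1/6 := inv_cast_le d 6 (by norm_num) (by omega)
      linarith
  · rintro (⟨rfl, rfl, rfl, hd3⟩ | ⟨rfl, rfl, rfl, hd4, hd11⟩ |
      ⟨rfl, rfl, rfl, hd5, hd7⟩ | ⟨rfl, rfl, rfl, hd4, hd5⟩)
    · have : (0:ℚ) < 1/d := by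
        have : (0:ℚ) < d := by exact_mod_cast (by omega : 0 < d)
        positivity
      norm_num
      linarith
    · interval_cases d <;> norm_num
    · interval_cases d <;> norm_num
    · interval_cases d <;> norm_num
end

section
/- Let 3 ≤ a₁ ≤ a₂ ≤ a₃ ≤ a₄ ≤ a₅ be integers. Then 1/a₁ + 1/a₂ + 1/a₃ + 1/a₄ + 1/a₅ − 3/2 > 0 if and only if (a₁, a₂, a₃, a₄) = (3,3,3,3) and 3 ≤ a₅ ≤ 5, in which case the value equals 1/a₅ − 1/6. -/
lemma inv_le_aux {k a : ℕ} (hk : 0 < k) (h : k ≤ a) : 1 / (a : ℚ) ≤ 1 / (k : ℚ) := by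
  apply one_div_le_one_div_of_le
  · exact_mod_cast hk
  · exact_mod_cast h

/-- Classification of the vertex patterns `(a₁, a₂, a₃, a₄, a₅)` with
`3 ≤ a₁ ≤ a₂ ≤ a₃ ≤ a₄ ≤ a₅` having positive combinatorial curvature
`∑ᵢ 1/aᵢ - 3/2 > 0` (the `n = 5` part of Table 1). -/
theorem quintuple_pos_curv_classification (a₁ a₂ a₃ a₄ a₅ : ℕ)
    (h1 : 3 ≤ a₁) (h12 : a₁ ≤ a₂) (h23 : a₂ ≤ a₃) (h34 : a₃ ≤ a₄) (h45 : a₄ ≤ a₅) :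
    0 < 1 / (a₁ : ℚ) + 1 / (a₂ : ℚ) + 1 / (a₃ : ℚ) + 1 / (a₄ : ℚ) + 1 / (a₅ : ℚ) - 3 / 2 ↔
      (a₁ = 3 ∧ a₂ = 3 ∧ a₃ = 3 ∧ a₄ = 3 ∧ 3 ≤ a₅ ∧ a₅ ≤ 5 ∧
        1 / (a₁ : ℚ) + 1 / (a₂ : ℚ) + 1 / (a₃ : ℚ) + 1 / (a₄ : ℚ) + 1 / (a₅ : ℚ) - 3 / 2
          = 1 / (a₅ : ℚ) - 1 / 6) := by
  constructor
  · intro h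
    have e1 : (1:ℚ)/a₁ ≤ 1/3 := inv_le_aux (by norm_num) h1
    have e2 : (1:ℚ)/a₂ ≤ 1/3 := inv_le_aux (by norm_num) (h1.trans h12)
    have e3 : (1:ℚ)/a₃ ≤ 1/3 := inv_le_aux (by norm_num) ((h1.trans h12).trans h23)
    have ha4 : a₄ ≤ 3 := by
      by_contra hc
      push_neg at hc
      have f4 : (1:ℚ)/a₄ ≤ 1/4 := inv_le_aux (by norm_num) hc
      have f5 : (1:ℚ)/a₅ ≤ 1/4 := inv_le_aux (by norm_num) (by omega : 4 ≤ a₅)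
      linarith
    have ha4' : a₄ = 3 := le_antisymm ha4 (h1.trans (h12.trans (h23.trans h34)))
    have ha3 : a₃ = 3 := le_antisymm (ha4' ▸ h34) ((h1.trans h12).trans h23)
    have ha2 : a₂ = 3 := le_antisymm (ha3 ▸ h23) (h1.trans h12)
    have ha1 : a₁ = 3 := le_antisymm (ha2 ▸ h12) h1
    subst ha1 ha2 ha3 ha4'
    have h5 : 3 ≤ a₅ := h45
    have hkey : (1:ℚ)/6 < 1/a₅ := by norm_num at h ⊢; linarith
    have ha5 : a₅ ≤ 5 := by
      by_contra hc
      push_neg at hc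
      have := inv_le_aux (k := 6) (by norm_num) hc
      linarith
    refine ⟨rfl, rfl, rfl, rfl, h5, ha5, by norm_num; ring⟩
  · rintro ⟨ha1, ha2, ha3, ha4, h5, ha5, heq⟩
    rw [heq]
    have : (1:ℚ)/a₅ ≥ 1/5 := inv_le_aux (by omega) ha5
    linarith
end

section
/- Let n ≥ 3 and let a = (a₁,…,aₙ) be a nondecreasing tuple of integers with each aᵢ ≥ 3, with combinatorial curvature Φ(a) = 1 − n/2 + Σᵢ₌₁ⁿ 1/aᵢ. Then Φ(a) = 0 if and only if a is one of the following seventeen patterns: (3,7,42), (3,8,24), (3,9,18), (3,10,15), (3,12,12), (4,5,20), (4,6,12), (4,8,8), (5,5,10), (6,6,6), (3,3,4,12), (3,3,6,6), (3,4,4,6), (4,4,4,4), (3,3,3,3,6), (3,3,3,4,4), (3,3,3,3,3,3). -/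
/-!
Vanishing curvature means `∑ 1 / aᵢ = n / 2 - 1`. As every `aᵢ ≥ 3`, the left side is at most
`n / 3`, whence `n ≤ 6`. The smallest entry `a₁` of a nondecreasing solution of `∑ 1 / aᵢ = q`
with `k` entries satisfies `q ≤ k / a₁`; so there are finitely many choices of `a₁`, and
recursing on the remaining entries with `q - 1 / a₁` turns the classification into a finite
search, which the kernel runs.
-/

/-- The combinatorial curvature of a vertex pattern, given as the list of
degrees of the incident faces: `Φ(a) = 1 - n/2 + ∑ i, 1/aᵢ`. -/
def curv (l : List ℕ) : ℚ :=
  1 - (l.length : ℚ) / 2 + (l.map fun x => (1 : ℚ) / x).sum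

def recipSum (l : List ℕ) : ℚ := (l.map fun x => (1 : ℚ) / x).sum

@[simp]
lemma recipSum_nil : recipSum [] = 0 := rfl

@[simp]
lemma recipSum_cons (a : ℕ) (l : List ℕ) : recipSum (a :: l) = 1 / a + recipSum l :=
  List.sum_cons

lemma recipSum_nonneg (l : List ℕ) : 0 ≤ recipSum l :=
  List.sum_nonneg (by simp)

lemma curv_eq_zero_iff (l : List ℕ) : curv l = 0 ↔ recipSum l = l.length / 2 - 1 := by
  rw [curv, recipSum]
  constructor <;> intro h <;> linarith

lemma recipSum_le_length_div {a : ℕ} {l : List ℕ} (ha : 0 < a) (hl : ∀ x ∈ l, a ≤ x) :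
    recipSum l ≤ l.length / a := by
  induction l with
  | nil => simp
  | cons x t ih =>
    simp only [List.forall_mem_cons] at hl
    have hx : (1 : ℚ) / x ≤ 1 / a := by gcongr; exact hl.1
    calc recipSum (x :: t) ≤ 1 / a + t.length / a := by
          rw [recipSum_cons]; exact add_le_add hx (ih hl.2)
      _ = (x :: t).length / a := by push_cast [List.length_cons]; ring

lemma length_le_six_of_curv_eq_zero {l : List ℕ} (hl : ∀ x ∈ l, 3 ≤ x) (h : curv l = 0) :
    l.length ≤ 6 := by
  have hsum := recipSum_le_length_div (by norm_num) hl
  rw [(curv_eq_zero_iff l).1 h] at hsum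
  have : (l.length : ℚ) ≤ 6 := by push_cast at hsum; linarith
  exact_mod_cast this

/-- The head `a` of a solution satisfies `q ≤ (k + 1) / a`, which bounds the candidates; for
`q ≤ 0` the floor is `0` and no candidate survives once `lo > 0`. -/
def egyptianFractions : ℕ → ℕ → ℚ → List (List ℕ)
  | 0, _, q => if q = 0 then [[]] else []
  | k + 1, lo, q =>
    ((List.range (⌊(k + 1 : ℚ) / q⌋₊ + 1)).filter (lo ≤ ·)).flatMap fun a =>
      (egyptianFractions k a (q - 1 / a)).map (a :: ·)

lemma mem_egyptianFractions_iff {k lo : ℕ} {q : ℚ} {l : List ℕ} (hlo : 0 < lo) :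
    l ∈ egyptianFractions k lo q ↔
      l.length = k ∧ l.Pairwise (· ≤ ·) ∧ (∀ x ∈ l, lo ≤ x) ∧ recipSum l = q := by
  induction k generalizing lo q l with
  | zero =>
    rcases l with _ | ⟨a, l⟩
    · by_cases hq : q = 0 <;> simp [egyptianFractions, hq, eq_comm]
    · by_cases hq : q = 0 <;> simp [egyptianFractions, hq]
  | succ k ih =>
    rcases l with _ | ⟨a, t⟩
    · simp [egyptianFractions]
    simp only [egyptianFractions, List.mem_flatMap, List.mem_filter, List.mem_range,
      decide_eq_true_eq, List.mem_map, List.cons.injEq]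
    constructor
    · rintro ⟨b, ⟨-, hlob⟩, u, hu, rfl, rfl⟩
      obtain ⟨hlen, hsort, hge, hsum⟩ := (ih (hlo.trans_le hlob)).1 hu
      exact ⟨by simp [hlen], List.pairwise_cons.2 ⟨hge, hsort⟩,
        List.forall_mem_cons.2 ⟨hlob, fun x hx => hlob.trans (hge x hx)⟩, by simp [hsum]⟩
    · rintro ⟨hlen, hsort, hge, hsum⟩
      rw [List.pairwise_cons] at hsort
      rw [List.forall_mem_cons] at hge
      have ha : 0 < a := hlo.trans_le hge.1
      have hlen : t.length = k := by simpa using hlen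
      have htail : recipSum t = q - 1 / a := by rw [← hsum, recipSum_cons]; ring
      have hq_pos : 0 < q := by
        rw [← hsum, recipSum_cons]
        have : (0 : ℚ) < 1 / a := by positivity
        linarith [recipSum_nonneg t]
      have hq_le : q ≤ (k + 1) / a := by
        have := recipSum_le_length_div ha hsort.1
        rw [hlen] at this
        rw [← hsum, recipSum_cons, add_div, add_comm]
        linarith
      have ha_le : a ≤ ⌊(k + 1 : ℚ) / q⌋₊ := by
        apply Nat.le_floor
        rw [le_div_iff₀ hq_pos]
        rw [le_div_iff₀ (by positivity)] at hq_le
        linarith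
      exact ⟨a, ⟨Nat.lt_succ_of_le ha_le, hge.1⟩, t,
        (ih ha).2 ⟨hlen, hsort.2, hsort.1, htail⟩, rfl, rfl⟩

def zeroCurvaturePatterns : List (List ℕ) :=
  (List.range 7).flatMap fun n => egyptianFractions n 3 (n / 2 - 1)

lemma zeroCurvaturePatterns_eq : zeroCurvaturePatterns =
    [[3, 7, 42], [3, 8, 24], [3, 9, 18], [3, 10, 15], [3, 12, 12], [4, 5, 20], [4, 6, 12],
      [4, 8, 8], [5, 5, 10], [6, 6, 6], [3, 3, 4, 12], [3, 3, 6, 6], [3, 4, 4, 6],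
      [4, 4, 4, 4], [3, 3, 3, 3, 6], [3, 3, 3, 4, 4], [3, 3, 3, 3, 3, 3]] := by
  decide +kernel

lemma curv_eq_zero_iff_mem_zeroCurvaturePatterns {l : List ℕ} (hsort : l.Pairwise (· ≤ ·))
    (hge : ∀ x ∈ l, 3 ≤ x) : curv l = 0 ↔ l ∈ zeroCurvaturePatterns := by
  simp only [zeroCurvaturePatterns, List.mem_flatMap, List.mem_range,
    mem_egyptianFractions_iff three_pos]
  constructor
  · intro h
    exact ⟨l.length, Nat.lt_succ_of_le (length_le_six_of_curv_eq_zero hge h), rfl, hsort, hge,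
      (curv_eq_zero_iff l).1 h⟩
  · rintro ⟨n, -, rfl, -, -, h⟩
    exact (curv_eq_zero_iff l).2 h

theorem pattern_zero_curv_classification_general (l : List ℕ)
    (hsort : l.Pairwise (· ≤ ·)) (hge : ∀ x ∈ l, 3 ≤ x) :
    curv l = 0 ↔
      l = [3, 7, 42] ∨ l = [3, 8, 24] ∨ l = [3, 9, 18] ∨ l = [3, 10, 15] ∨
      l = [3, 12, 12] ∨ l = [4, 5, 20] ∨ l = [4, 6, 12] ∨ l = [4, 8, 8] ∨
      l = [5, 5, 10] ∨ l = [6, 6, 6] ∨ l = [3, 3, 4, 12] ∨ l = [3, 3, 6, 6] ∨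
      l = [3, 4, 4, 6] ∨ l = [4, 4, 4, 4] ∨ l = [3, 3, 3, 3, 6] ∨
      l = [3, 3, 3, 4, 4] ∨ l = [3, 3, 3, 3, 3, 3] := by
  rw [curv_eq_zero_iff_mem_zeroCurvaturePatterns hsort hge, zeroCurvaturePatterns_eq]
  simp only [List.mem_cons, List.not_mem_nil, or_false]

/-- Classification (Table 2) of all vertex patterns (nondecreasing, length `≥ 3`,
entries `≥ 3`) with vanishing combinatorial curvature: exactly the seventeen
patterns listed. -/
theorem pattern_zero_curv_classification (l : List ℕ) (hlen : 3 ≤ l.length)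
    (hsort : l.Pairwise (· ≤ ·)) (hge : ∀ x ∈ l, 3 ≤ x) :
    curv l = 0 ↔
      l = [3, 7, 42] ∨ l = [3, 8, 24] ∨ l = [3, 9, 18] ∨ l = [3, 10, 15] ∨
      l = [3, 12, 12] ∨ l = [4, 5, 20] ∨ l = [4, 6, 12] ∨ l = [4, 8, 8] ∨
      l = [5, 5, 10] ∨ l = [6, 6, 6] ∨ l = [3, 3, 4, 12] ∨ l = [3, 3, 6, 6] ∨
      l = [3, 4, 4, 6] ∨ l = [4, 4, 4, 4] ∨ l = [3, 3, 3, 3, 6] ∨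
      l = [3, 3, 3, 4, 4] ∨ l = [3, 3, 3, 3, 3, 3] :=
  pattern_zero_curv_classification_general l hsort hge
end

section
/- Let n ≥ 3 and let a = (a₁,…,aₙ) be a nondecreasing tuple of integers with each aᵢ ≥ 3, with combinatorial curvature Φ(a) = 1 − n/2 + Σᵢ₌₁ⁿ 1/aᵢ. If the largest entry satisfies k := aₙ ≥ 43 and Φ(a) ≥ 0, then a is one of (3,3,k), (3,4,k), (3,5,k), (3,6,k), (4,4,k), (3,3,3,k), and in every case Φ(a) ≥ 1/k. -/
-- In `curv` the list is first coerced to `List ℚ` through the list monad.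
lemma curv_eq (l : List ℕ) :
    curv l = 1 - (l.length : ℚ) / 2 + (l.map fun x : ℕ => (1 : ℚ) / x).sum := by
  simp [curv, ← List.map_eq_flatMap, Function.comp_def]

lemma curv_append_singleton (l : List ℕ) (k : ℕ) :
    curv (l ++ [k]) = curv l - 1 / 2 + 1 / k := by
  simp only [curv_eq, List.length_append, List.length_singleton, List.map_append, List.map_cons,
    List.map_nil, List.sum_append, List.sum_singleton]
  push_cast
  ring

lemma curv_le_of_forall_three_le {l : List ℕ} (hl : ∀ x ∈ l, 3 ≤ x) :
    curv l ≤ 1 - l.length / 6 := by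
  have hsum : (l.map fun x : ℕ => (1 : ℚ) / x).sum ≤
      (l.map fun x : ℕ => (1 : ℚ) / x).length • (1 / 3) :=
    List.sum_le_card_nsmul _ _ <| by
      simp only [List.mem_map, forall_exists_index, and_imp]
      rintro _ x hx rfl
      gcongr
      exact_mod_cast hl x hx
  rw [List.length_map, nsmul_eq_mul] at hsum
  rw [curv_eq]
  linarith

lemma curv_pair_mem_or_le {a b : ℕ} (ha : 3 ≤ a) (hab : a ≤ b) :
    [a, b] ∈ [[3, 3], [3, 4], [3, 5], [3, 6], [4, 4]] ∨ curv [a, b] ≤ 10 / 21 := by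
  have hcurv : curv [a, b] = 1 / a + 1 / b := by simp [curv_eq]
  rw [hcurv]
  by_cases hsmall : a ≤ 4 ∧ b ≤ 6
  · obtain ⟨ha4, hb6⟩ := hsmall
    interval_cases a <;> interval_cases b <;> norm_num
  · right
    have hb : (1 : ℚ) / b ≤ 1 / a := by gcongr
    rcases not_and_or.mp hsmall with ha5 | hb7
    · have : (1 : ℚ) / a ≤ 1 / 5 := by gcongr; exact_mod_cast Nat.lt_of_not_le ha5
      linarith
    · have : (1 : ℚ) / a ≤ 1 / 3 := by gcongr; exact_mod_cast ha
      have : (1 : ℚ) / b ≤ 1 / 7 := by gcongr; exact_mod_cast Nat.lt_of_not_le hb7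
      linarith

lemma curv_triple_eq_or_le {a b c : ℕ} (ha : 3 ≤ a) (hab : a ≤ b) (hbc : b ≤ c) :
    [a, b, c] = [3, 3, 3] ∨ curv [a, b, c] ≤ 10 / 21 := by
  have hcurv : curv [a, b, c] = 1 / a + 1 / b + 1 / c - 1 / 2 := by
    simp only [curv_eq, List.length_cons, List.length_nil, List.map_cons, List.map_nil,
      List.sum_cons, List.sum_nil]
    push_cast
    ring
  rw [hcurv]
  rcases (show c = 3 ∨ 4 ≤ c by omega) with rfl | hc4
  · obtain rfl : b = 3 := by omega
    obtain rfl : a = 3 := by omega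
    exact .inl rfl
  · right
    have : (1 : ℚ) / a ≤ 1 / 3 := by gcongr; exact_mod_cast ha
    have : (1 : ℚ) / b ≤ 1 / 3 := by gcongr; exact_mod_cast ha.trans hab
    have : (1 : ℚ) / c ≤ 1 / 4 := by gcongr; exact_mod_cast hc4
    linarith

lemma mem_patterns_or_curv_le {l : List ℕ} (hlen : 2 ≤ l.length) (hsort : l.Pairwise (· ≤ ·))
    (hge : ∀ x ∈ l, 3 ≤ x) :
    l ∈ [[3, 3], [3, 4], [3, 5], [3, 6], [4, 4], [3, 3, 3]] ∨ curv l ≤ 10 / 21 := by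
  rcases l with _ | ⟨a, _ | ⟨b, _ | ⟨c, _ | ⟨d, rest⟩⟩⟩⟩
  · simp at hlen
  · simp at hlen
  · rcases curv_pair_mem_or_le (hge a (by simp))
      (List.rel_of_pairwise_cons hsort (List.mem_singleton_self b)) with h | h
    · left; simp only [List.mem_cons] at h ⊢; tauto
    · exact .inr h
  · rcases curv_triple_eq_or_le (hge a (by simp))
      (List.rel_of_pairwise_cons hsort List.mem_cons_self)
      (List.rel_of_pairwise_cons hsort.of_cons (List.mem_singleton_self c)) with h | h
    · left; rw [h]; simp
    · exact .inr h
  · right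
    have hlen4 : (4 : ℚ) ≤ (a :: b :: c :: d :: rest).length := by
      simp only [List.length_cons]; push_cast; linarith
    linarith [curv_le_of_forall_three_le hge]

lemma half_le_curv_of_mem {l : List ℕ}
    (hl : l ∈ [[3, 3], [3, 4], [3, 5], [3, 6], [4, 4], [3, 3, 3]]) : 1 / 2 ≤ curv l := by
  simp only [List.mem_cons, List.not_mem_nil, or_false] at hl
  rcases hl with rfl | rfl | rfl | rfl | rfl | rfl <;> norm_num [curv_eq]

/-- Arithmetic core of Lemma 2.2: if a vertex pattern (nondecreasing, length `≥ 3`,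
entries `≥ 3`) has largest entry `k = aₙ ≥ 43` and nonnegative curvature, then
the pattern is one of `(3,3,k), (3,4,k), (3,5,k), (3,6,k), (4,4,k), (3,3,3,k)`,
and in every case its curvature is at least `1/k`. -/
theorem pattern_large_face_classification (l : List ℕ) (hlen : 3 ≤ l.length)
    (hsort : l.Pairwise (· ≤ ·)) (hge : ∀ x ∈ l, 3 ≤ x)
    (hk : 43 ≤ l.getLast!) (hnonneg : 0 ≤ curv l) :
    (l = [3, 3, l.getLast!] ∨ l = [3, 4, l.getLast!] ∨ l = [3, 5, l.getLast!] ∨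
      l = [3, 6, l.getLast!] ∨ l = [4, 4, l.getLast!] ∨ l = [3, 3, 3, l.getLast!]) ∧
    1 / (l.getLast! : ℚ) ≤ curv l := by
  obtain ⟨init, k, rfl⟩ : ∃ init k, l = init ++ [k] := by
    rcases List.eq_nil_or_concat l with rfl | ⟨init, k, rfl⟩
    · simp at hlen
    · exact ⟨init, k, List.concat_eq_append ..⟩
  rw [show (init ++ [k]).getLast! = k by simp] at hk ⊢
  rw [curv_append_singleton] at hnonneg ⊢
  rw [List.pairwise_append] at hsort
  rcases mem_patterns_or_curv_le (by simpa using hlen) hsort.1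
    (fun x hx => hge x (List.mem_append_left _ hx)) with hmem | hle
  · refine ⟨?_, by linarith [half_le_curv_of_mem hmem]⟩
    simp only [List.mem_cons, List.not_mem_nil, or_false] at hmem
    rcases hmem with rfl | rfl | rfl | rfl | rfl | rfl <;> simp
  · have : (1 : ℚ) / k ≤ 1 / 43 := by gcongr; exact_mod_cast hk
    linarith
end

section
/- Let m ≥ 2 and let a = (a₁,…,aₘ) be a nondecreasing tuple of integers with each aᵢ ≥ 3, and define the boundary combinatorial curvature Φ(a) = 1 − (m+1)/2 + Σᵢ₌₁ᵐ 1/aᵢ. If Φ(a) > 0, then Φ(a) ∈ {1/30, 1/12, 1/6}; in particular Φ(a) ≥ 1/30. -/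
/-- The combinatorial curvature of a boundary vertex pattern: a boundary vertex
of degree `m + 1` incident to `m` faces of degrees `a₁ ≤ … ≤ aₘ` has curvature
`Φ = 1 - (m+1)/2 + ∑ᵢ 1/aᵢ`. -/
def bcurv (l : List ℕ) : ℚ :=
  1 - ((l.length : ℚ) + 1) / 2 + (l.map fun x => (1 : ℚ) / x).sum

/-! Each face contributes at most `1/3`, so `Φ ≤ 1/2 - m/6` and positivity forces `m = 2`.
For two faces `Φ = 1/a + 1/b - 1/2`, and `Φ > 0` with `a, b ≥ 3` bounds both degrees by `5`;
the remaining nine patterns are checked directly. -/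

-- In `bcurv` the list is coerced to `List ℚ` by a monadic lift before mapping; this undoes it.
lemma bcurv_eq_sum_map (l : List ℕ) :
    bcurv l = 1 - ((l.length : ℚ) + 1) / 2 + (l.map fun x : ℕ => (1 : ℚ) / x).sum := by
  unfold bcurv
  congr 2
  induction l with
  | nil => rfl
  | cons a t ih => simpa using ih

lemma bcurv_pair (a b : ℕ) : bcurv [a, b] = 1 / a + 1 / b - 1 / 2 := by
  norm_num [bcurv]
  ring

lemma bcurv_le_of_three_le (l : List ℕ) (hge : ∀ x ∈ l, 3 ≤ x) :
    bcurv l ≤ 1 / 2 - l.length / 6 := by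
  have hterm : ∀ y ∈ l.map fun x : ℕ => (1 : ℚ) / x, y ≤ 1 / 3 := by
    simp only [List.mem_map, forall_exists_index, and_imp, forall_apply_eq_imp_iff₂]
    intro x hx
    gcongr
    exact_mod_cast hge x hx
  have hsum := List.sum_le_card_nsmul _ _ hterm
  rw [List.length_map, nsmul_eq_mul] at hsum
  rw [bcurv_eq_sum_map]
  linarith

lemma length_eq_two_of_bcurv_pos (l : List ℕ) (hlen : 2 ≤ l.length)
    (hge : ∀ x ∈ l, 3 ≤ x) (hpos : 0 < bcurv l) : l.length = 2 := by
  have hlt : (l.length : ℚ) < 3 := by linarith [bcurv_le_of_three_le l hge]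
  have : l.length < 3 := by exact_mod_cast hlt
  omega

lemma le_five_of_half_lt_inv_add_inv {a b : ℕ} (hb : 3 ≤ b)
    (h : 1 / 2 < (1 : ℚ) / a + 1 / b) : a ≤ 5 := by
  by_contra! ha
  have ha' : (6 : ℚ) ≤ a := by exact_mod_cast ha
  have hb' : (3 : ℚ) ≤ b := by exact_mod_cast hb
  have : (1 : ℚ) / a ≤ 1 / 6 := by gcongr
  have : (1 : ℚ) / b ≤ 1 / 3 := by gcongr
  linarith

theorem boundary_pattern_pos_curv_values_general (l : List ℕ) (hlen : 2 ≤ l.length)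
    (hge : ∀ x ∈ l, 3 ≤ x)
    (hpos : 0 < bcurv l) :
    bcurv l ∈ ({1 / 30, 1 / 12, 1 / 6} : Set ℚ) ∧ 1 / 30 ≤ bcurv l := by
  obtain ⟨a, b, rfl⟩ := List.length_eq_two.mp (length_eq_two_of_bcurv_pos l hlen hge hpos)
  have ha : 3 ≤ a := hge a (by simp)
  have hb : 3 ≤ b := hge b (by simp)
  rw [bcurv_pair] at hpos ⊢
  have ha5 : a ≤ 5 := le_five_of_half_lt_inv_add_inv hb (by linarith)
  have hb5 : b ≤ 5 := le_five_of_half_lt_inv_add_inv ha (by linarith)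
  interval_cases a <;> interval_cases b <;> norm_num at *

/-- If a boundary vertex pattern (nondecreasing, `m ≥ 2` faces, face degrees `≥ 3`)
has positive curvature, then its curvature lies in `{1/30, 1/12, 1/6}`;
in particular it is at least `1/30`. -/
theorem boundary_pattern_pos_curv_values (l : List ℕ) (hlen : 2 ≤ l.length)
    (hsort : l.Pairwise (· ≤ ·)) (hge : ∀ x ∈ l, 3 ≤ x)
    (hpos : 0 < bcurv l) :
    bcurv l ∈ ({1 / 30, 1 / 12, 1 / 6} : Set ℚ) ∧ 1 / 30 ≤ bcurv l :=
  boundary_pattern_pos_curv_values_general l hlen hge hpos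
end
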